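/- arXiv:2306.12328 — 3 statements merged into one kernel-verified Lean document; each statement's English description precedes it below -/
import Mathlib

section
/- For a simple thermodynamic system with smooth Lagrangian L(q, v, S) on ℝⁿ × ℝⁿ × ℝ, external force F^ext and friction force F^fr, suppose curves q(t), S(t) satisfy d/dt(∂L/∂v) − ∂L/∂q = F^fr + F^ext and (∂L/∂S)·Ṡ = ⟨F^fr, q̇⟩. Then the total energy E(q, v, S) = ⟨∂L/∂v, v⟩ − L(q, v, S) satisfies d/dt E(q, q̇, S) = ⟨F^ext(q, q̇, S), q̇⟩ (the first law: the friction contribution cancels). -/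
open Matrix

theorem HasDerivAt.dotProduct {𝕜 ι : Type*} [NontriviallyNormedField 𝕜] [Fintype ι]
    {f g : 𝕜 → ι → 𝕜} {f' g' : ι → 𝕜} {x : 𝕜}
    (hf : HasDerivAt f f' x) (hg : HasDerivAt g g' x) :
    HasDerivAt (fun s => f s ⬝ᵥ g s) (f' ⬝ᵥ g x + f x ⬝ᵥ g') x := by
  unfold _root_.dotProduct
  rw [← Finset.sum_add_distrib]
  exact HasDerivAt.fun_sum fun i _ =>
    (hasDerivAt_pi.mp hf i).mul (hasDerivAt_pi.mp hg i)

theorem first_law_simple_thermodynamic_general {n : ℕ}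
    (L : (Fin n → ℝ) → (Fin n → ℝ) → ℝ → ℝ)
    (Lq Lv : (Fin n → ℝ) → (Fin n → ℝ) → ℝ → (Fin n → ℝ))
    (LS : (Fin n → ℝ) → (Fin n → ℝ) → ℝ → ℝ)
    (Ffr Fext : (Fin n → ℝ) → (Fin n → ℝ) → ℝ → (Fin n → ℝ))
    (q q' q'' : ℝ → Fin n → ℝ) (S S' : ℝ → ℝ)
    (hq' : ∀ t, HasDerivAt q' (q'' t) t)
    -- chain rule for `L` along the curve, with partial gradients `Lq`, `Lv` and `∂L/∂S = LS`
    (hL : ∀ t, HasDerivAt (fun s => L (q s) (q' s) (S s))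
      (Lq (q t) (q' t) (S t) ⬝ᵥ q' t + Lv (q t) (q' t) (S t) ⬝ᵥ q'' t
        + LS (q t) (q' t) (S t) * S' t) t)
    -- Euler–Lagrange equations with friction and external forces
    (hEL : ∀ t, HasDerivAt (fun s => Lv (q s) (q' s) (S s))
      (Lq (q t) (q' t) (S t) + Ffr (q t) (q' t) (S t) + Fext (q t) (q' t) (S t)) t)
    -- phenomenological (entropy) constraint
    (hent : ∀ t, LS (q t) (q' t) (S t) * S' t = Ffr (q t) (q' t) (S t) ⬝ᵥ q' t) :
    ∀ t, HasDerivAt (fun s => Lv (q s) (q' s) (S s) ⬝ᵥ q' s - L (q s) (q' s) (S s))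
      (Fext (q t) (q' t) (S t) ⬝ᵥ q' t) t := by
  intro t
  have hmomentum := (hEL t).dotProduct (hq' t)
  refine (hmomentum.sub (hL t)).congr_deriv ?_
  simp only [add_dotProduct]
  linarith [hent t]

/-- First law for a simple thermodynamic system.
If `(q, S)` satisfies `d/dt(∂L/∂v) − ∂L/∂q = F^fr + F^ext` and the phenomenological
constraint `(∂L/∂S)·Ṡ = ⟨F^fr, q̇⟩`, then the total energy
`E(q,v,S) = ⟨∂L/∂v, v⟩ − L(q,v,S)` satisfies `d/dt E = ⟨F^ext, q̇⟩`. -/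
theorem first_law_simple_thermodynamic {n : ℕ}
    (L : (Fin n → ℝ) → (Fin n → ℝ) → ℝ → ℝ)
    (Lq Lv : (Fin n → ℝ) → (Fin n → ℝ) → ℝ → (Fin n → ℝ))
    (LS : (Fin n → ℝ) → (Fin n → ℝ) → ℝ → ℝ)
    (Ffr Fext : (Fin n → ℝ) → (Fin n → ℝ) → ℝ → (Fin n → ℝ))
    (q q' q'' : ℝ → Fin n → ℝ) (S S' : ℝ → ℝ)
    (hq : ∀ t, HasDerivAt q (q' t) t)
    (hq' : ∀ t, HasDerivAt q' (q'' t) t)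
    (hS : ∀ t, HasDerivAt S (S' t) t)
    -- chain rule for `L` along the curve, with partial gradients `Lq`, `Lv` and `∂L/∂S = LS`
    (hL : ∀ t, HasDerivAt (fun s => L (q s) (q' s) (S s))
      (Lq (q t) (q' t) (S t) ⬝ᵥ q' t + Lv (q t) (q' t) (S t) ⬝ᵥ q'' t
        + LS (q t) (q' t) (S t) * S' t) t)
    -- Euler–Lagrange equations with friction and external forces
    (hEL : ∀ t, HasDerivAt (fun s => Lv (q s) (q' s) (S s))
      (Lq (q t) (q' t) (S t) + Ffr (q t) (q' t) (S t) + Fext (q t) (q' t) (S t)) t)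
    -- phenomenological (entropy) constraint
    (hent : ∀ t, LS (q t) (q' t) (S t) * S' t = Ffr (q t) (q' t) (S t) ⬝ᵥ q' t) :
    ∀ t, HasDerivAt (fun s => Lv (q s) (q' s) (S s) ⬝ᵥ q' s - L (q s) (q' s) (S s))
      (Fext (q t) (q' t) (S t) ⬝ᵥ q' t) t :=
  first_law_simple_thermodynamic_general L Lq Lv LS Ffr Fext q q' q'' S S' hq' hL hEL hent
end

section
/- Under the hypotheses of the previous setting, if in addition ⟨F^fr_k, q̇_k⟩ ≤ 0 for all k and J_{kℓ} ≤ 0 for all k ≠ ℓ, then the total entropy production rate Ṡ = Σ_k Ṡ_k is nonnegative (second law for the isolated interconnected system). -/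
/-!
Dividing the balance law by `T k`, the entropy rate splits into a friction part
`-⟨F^fr_k, q̇_k⟩ / T k`, nonnegative term by term, and an exchange part
`∑ₗ J k l (T k - T l) / T k`. Pairing the `(k, l)` and `(l, k)` terms of the exchange part and
using the symmetry of `J` gives `J k l (T k - T l) (1 / T k - 1 / T l) = -J k l (T k - T l)² / (T k T l)`,
which is nonnegative because `J k l ≤ 0`: heat only flows from the hotter to the colder body.
-/

open Matrix Finset

theorem Finset.sum_sum_nonneg_of_add_swap_nonneg {ι M : Type*} [Fintype ι] [AddCommMonoid M]
    [LinearOrder M] [IsOrderedAddMonoid M] {g : ι → ι → M} (hg : ∀ i j, 0 ≤ g i j + g j i) :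
    0 ≤ ∑ i, ∑ j, g i j := by
  have hsymm : ∑ i, ∑ j, (g i j + g j i) = 2 • ∑ i, ∑ j, g i j := by
    simp only [two_nsmul, sum_add_distrib]
    rw [sum_comm (f := fun i j => g j i)]
  rw [← nsmul_nonneg_iff two_ne_zero, ← hsymm]
  exact sum_nonneg fun i _ => sum_nonneg fun j _ => hg i j

theorem exchange_pair_eq {K : Type*} [Field K] {a b : K} (ha : a ≠ 0) (hb : b ≠ 0) (J : K) :
    J * (a - b) / a + J * (b - a) / b = -J * (a - b) ^ 2 / (a * b) := by
  field_simp
  ring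

section ExchangeEntropy

variable {K : Type*} [Field K] [LinearOrder K] [IsStrictOrderedRing K]

theorem exchange_pair_nonneg {a b J : K} (ha : 0 < a) (hb : 0 < b) (hJ : J ≤ 0) :
    0 ≤ J * (a - b) / a + J * (b - a) / b := by
  rw [exchange_pair_eq ha.ne' hb.ne']
  exact div_nonneg (mul_nonneg (neg_nonneg.2 hJ) (sq_nonneg _)) (mul_pos ha hb).le

theorem sum_exchange_entropy_nonneg {ι : Type*} [Fintype ι] {T : ι → K} (hT : ∀ k, 0 < T k)
    {J : ι → ι → K} (hJsymm : ∀ k l, J k l = J l k) (hJneg : ∀ k l, k ≠ l → J k l ≤ 0) :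
    0 ≤ ∑ k, ∑ l, J k l * (T k - T l) / T k := by
  refine Finset.sum_sum_nonneg_of_add_swap_nonneg fun k l => ?_
  rcases eq_or_ne k l with rfl | hkl
  · simp
  · rw [← hJsymm k l]
    exact exchange_pair_nonneg (hT k) (hT l) (hJneg k l hkl)

end ExchangeEntropy

theorem second_law_interconnected_general {P n : ℕ}
    (T : Fin P → ℝ) (hT : ∀ k, 0 < T k)
    (Ffr v : Fin P → (Fin n → ℝ)) (S' : Fin P → ℝ)
    (hfr : ∀ k, Ffr k ⬝ᵥ v k ≤ 0)
    (J : Fin P → Fin P → ℝ)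
    (hJsymm : ∀ k l, J k l = J l k)
    (hJneg : ∀ k l, k ≠ l → J k l ≤ 0)
    (heq : ∀ k, T k * S' k = -(Ffr k ⬝ᵥ v k) + ∑ l, J k l * (T k - T l)) :
    0 ≤ ∑ k, S' k := by
  have hS : ∀ k, S' k = -(Ffr k ⬝ᵥ v k) / T k + ∑ l, J k l * (T k - T l) / T k := fun k => by
    rw [← sum_div, ← add_div, eq_div_iff (hT k).ne', mul_comm, heq k]
  rw [sum_congr rfl fun k _ => hS k, sum_add_distrib]
  have hfriction : 0 ≤ ∑ k, -(Ffr k ⬝ᵥ v k) / T k :=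
    sum_nonneg fun k _ => div_nonneg (neg_nonneg.2 (hfr k)) (hT k).le
  exact add_nonneg hfriction (sum_exchange_entropy_nonneg hT hJsymm hJneg)

/-- Second law for the isolated interconnected system: if
`⟨F^fr_k, q̇_k⟩ ≤ 0` for all `k` and `J_{kℓ} ≤ 0` for `k ≠ ℓ`, then the total
entropy production rate `Ṡ = Σ_k Ṡ_k` is nonnegative. -/
theorem second_law_interconnected {P n : ℕ}
    (T : Fin P → ℝ) (hT : ∀ k, 0 < T k)
    (Ffr v : Fin P → (Fin n → ℝ)) (S' : Fin P → ℝ)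
    (hfr : ∀ k, Ffr k ⬝ᵥ v k ≤ 0)
    (J : Fin P → Fin P → ℝ)
    (hJsymm : ∀ k l, J k l = J l k) (hJdiag : ∀ k, J k k = 0)
    (hJneg : ∀ k l, k ≠ l → J k l ≤ 0)
    (heq : ∀ k, T k * S' k = -(Ffr k ⬝ᵥ v k) + ∑ l, J k l * (T k - T l)) :
    0 ≤ ∑ k, S' k :=
  second_law_interconnected_general T hT Ffr v S' hfr J hJsymm hJneg heq
end

section
/- For the full adiabatic piston system (m₁+m₂) q̈ = p₁A₁ − p₂A₂ − (λ₁+λ₂) q̇, T¹ Ṡ₁ = κ(T² − T¹) + λ₁ q̇², T² Ṡ₂ = κ(T¹ − T²) + λ₂ q̇², with κ, λ₁, λ₂ ≥ 0 and T¹, T² > 0, the total entropy S₁ + S₂ is nondecreasing along solutions. -/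
/-!
Multiplying the two entropy balances by the other temperature and adding them, the heat
exchange terms combine to `κ (T² − T¹)²`, so `T¹ T² (Ṡ₁ + Ṡ₂) = κ (T² − T¹)² + λ₁ q̇² T² + λ₂ q̇² T¹ ≥ 0`.
Positivity of the temperatures then gives `Ṡ₁ + Ṡ₂ ≥ 0`.
-/

lemma entropy_production_nonneg {κ T₁ T₂ σ₁ σ₂ x₁ x₂ : ℝ} (hκ : 0 ≤ κ)
    (hT₁ : 0 < T₁) (hT₂ : 0 < T₂) (hσ₁ : 0 ≤ σ₁) (hσ₂ : 0 ≤ σ₂)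
    (h₁ : T₁ * x₁ = κ * (T₂ - T₁) + σ₁) (h₂ : T₂ * x₂ = κ * (T₁ - T₂) + σ₂) :
    0 ≤ x₁ + x₂ := by
  have hbalance : T₁ * T₂ * (x₁ + x₂) = κ * (T₂ - T₁) ^ 2 + σ₁ * T₂ + σ₂ * T₁ := by
    linear_combination T₂ * h₁ + T₁ * h₂
  refine nonneg_of_mul_nonneg_right ?_ (mul_pos hT₁ hT₂)
  rw [hbalance]
  positivity

theorem piston_total_entropy_nondecreasing_general
    (κ : ℝ) (hκ : 0 ≤ κ)
    (T1 T2 lam₁ lam₂ : ℝ → ℝ)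
    (hT1 : ∀ t, 0 < T1 t) (hT2 : ∀ t, 0 < T2 t)
    (hlam₁ : ∀ t, 0 ≤ lam₁ t) (hlam₂ : ∀ t, 0 ≤ lam₂ t)
    (q' S₁ S₂ S₁' S₂' : ℝ → ℝ)
    (hS₁ : ∀ t, HasDerivAt S₁ (S₁' t) t)
    (hS₂ : ∀ t, HasDerivAt S₂ (S₂' t) t)
    (hent1 : ∀ t, T1 t * S₁' t = κ * (T2 t - T1 t) + lam₁ t * (q' t) ^ 2)
    (hent2 : ∀ t, T2 t * S₂' t = κ * (T1 t - T2 t) + lam₂ t * (q' t) ^ 2) :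
    Monotone (fun t => S₁ t + S₂ t) :=
  monotone_of_hasDerivAt_nonneg (fun t => (hS₁ t).add (hS₂ t)) fun t =>
    entropy_production_nonneg hκ (hT1 t) (hT2 t)
      (mul_nonneg (hlam₁ t) (sq_nonneg _)) (mul_nonneg (hlam₂ t) (sq_nonneg _))
      (hent1 t) (hent2 t)

/-- For the full adiabatic piston system
`(m₁+m₂) q̈ = p₁A₁ − p₂A₂ − (λ₁+λ₂) q̇`, `T¹ Ṡ₁ = κ(T² − T¹) + λ₁ q̇²`,
`T² Ṡ₂ = κ(T¹ − T²) + λ₂ q̇²`, with `κ, λ₁, λ₂ ≥ 0` and `T¹, T² > 0`,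
the total entropy `S₁ + S₂` is nondecreasing along solutions. -/
theorem piston_total_entropy_nondecreasing
    (m₁ m₂ A₁ A₂ κ : ℝ) (hm₁ : 0 < m₁) (hm₂ : 0 < m₂) (hκ : 0 ≤ κ)
    (p₁ p₂ T1 T2 lam₁ lam₂ : ℝ → ℝ)
    (hT1 : ∀ t, 0 < T1 t) (hT2 : ∀ t, 0 < T2 t)
    (hlam₁ : ∀ t, 0 ≤ lam₁ t) (hlam₂ : ∀ t, 0 ≤ lam₂ t)
    (q q' q'' S₁ S₂ S₁' S₂' : ℝ → ℝ)
    (hq : ∀ t, HasDerivAt q (q' t) t)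
    (hq' : ∀ t, HasDerivAt q' (q'' t) t)
    (hS₁ : ∀ t, HasDerivAt S₁ (S₁' t) t)
    (hS₂ : ∀ t, HasDerivAt S₂ (S₂' t) t)
    (hmech : ∀ t, (m₁ + m₂) * q'' t = p₁ t * A₁ - p₂ t * A₂ - (lam₁ t + lam₂ t) * q' t)
    (hent1 : ∀ t, T1 t * S₁' t = κ * (T2 t - T1 t) + lam₁ t * (q' t) ^ 2)
    (hent2 : ∀ t, T2 t * S₂' t = κ * (T1 t - T2 t) + lam₂ t * (q' t) ^ 2) :
    Monotone (fun t => S₁ t + S₂ t) :=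
  piston_total_entropy_nondecreasing_general κ hκ T1 T2 lam₁ lam₂ hT1 hT2 hlam₁ hlam₂ q' S₁ S₂ S₁'
    S₂' hS₁ hS₂ hent1 hent2
end
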